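/- arXiv:1801.06031 — 2 statements merged into one kernel-verified Lean document; each statement's English description precedes it below -/
import Mathlib

section
/- Let {|ψ_i⟩, η_i}_{i=1}^n and {|φ_i⟩, η_i}_{i=1}^n be two ensembles of unit vectors in ℂ^d with the same probabilities η_i. If either ⟨ψ_i|ψ_j⟩ = ⟨φ_i|φ_j⟩ for all i, j, or ⟨ψ_i|ψ_j⟩ = conj(⟨φ_i|φ_j⟩) for all i, j, then the optimal success probabilities of ambiguous discrimination coincide: P_S^opt({|ψ_i⟩, η_i}) = P_S^opt({|φ_i⟩, η_i}). -/
open scoped BigOperators ComplexOrder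

noncomputable section
open scoped Classical

/-- Positive semidefinite square root of a matrix (junk value `0` if not PSD). -/
noncomputable def msqrt {d : ℕ} (A : Matrix (Fin d) (Fin d) ℂ) : Matrix (Fin d) (Fin d) ℂ :=
  if h : A.PosSemidef then
    (h.1.eigenvectorUnitary : Matrix (Fin d) (Fin d) ℂ) *
      Matrix.diagonal ((↑) ∘ (√·) ∘ h.1.eigenvalues) *
      (star h.1.eigenvectorUnitary : Matrix (Fin d) (Fin d) ℂ) else 0

/-- A density matrix: positive semidefinite with trace one. -/
def IsDensityMatrix {d : ℕ} (ρ : Matrix (Fin d) (Fin d) ℂ) : Prop :=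
  ρ.PosSemidef ∧ ρ.trace = 1

/-- An incoherent state: a density matrix diagonal in the standard basis. -/
def IsIncoherent {d : ℕ} (σ : Matrix (Fin d) (Fin d) ℂ) : Prop :=
  IsDensityMatrix σ ∧ ∀ i j, i ≠ j → σ i j = 0

/-- Fidelity `F(ρ,σ) = (Tr √(√σ ρ √σ))²`. -/
noncomputable def fid {d : ℕ} (ρ σ : Matrix (Fin d) (Fin d) ℂ) : ℝ :=
  ((msqrt (msqrt σ * ρ * msqrt σ)).trace).re ^ 2

/-- Maximal fidelity with incoherent states. -/
noncomputable def maxFid {d : ℕ} (ρ : Matrix (Fin d) (Fin d) ℂ) : ℝ :=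
  sSup {x : ℝ | ∃ σ, IsIncoherent σ ∧ x = fid ρ σ}

/-- Geometric coherence `C_g(ρ) = 1 − F(ρ)`. -/
noncomputable def geomCoh {d : ℕ} (ρ : Matrix (Fin d) (Fin d) ℂ) : ℝ :=
  1 - maxFid ρ

/-- A POVM with `n` outcomes on a Hilbert space. -/
def IsPOVM {H : Type*} [NormedAddCommGroup H] [InnerProductSpace ℂ H] [CompleteSpace H]
    {n : ℕ} (M : Fin n → H →L[ℂ] H) : Prop :=
  (∀ i, (M i).IsPositive) ∧ (∑ i, M i) = 1

/-- Optimal success probability of ambiguous discrimination of the ensemble `{ψ i, η i}`. -/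
noncomputable def optSuccess {H : Type*} [NormedAddCommGroup H] [InnerProductSpace ℂ H]
    [CompleteSpace H] {n : ℕ} (ψ : Fin n → H) (η : Fin n → ℝ) : ℝ :=
  sSup {x : ℝ | ∃ M : Fin n → H →L[ℂ] H, IsPOVM M ∧
    x = ∑ i, η i * ((inner ℂ (ψ i) ((M i) (ψ i)) : ℂ)).re}

/-- Optimal von Neumann success probability (over orthonormal bases of `ℂ^d`). -/
noncomputable def vnSuccess {d : ℕ} (ψ : Fin d → EuclideanSpace ℂ (Fin d))
    (η : Fin d → ℝ) : ℝ :=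
  sSup {x : ℝ | ∃ f : Fin d → EuclideanSpace ℂ (Fin d), Orthonormal ℂ f ∧
    x = ∑ i, η i * ‖(inner ℂ (f i) (ψ i) : ℂ)‖ ^ 2}

/-- The column `√ρ e_i` of the square root of `ρ`, as a vector of `ℂ^d`. -/
noncomputable def sqrtCol {d : ℕ} (ρ : Matrix (Fin d) (Fin d) ℂ) (i : Fin d) :
    EuclideanSpace ℂ (Fin d) :=
  WithLp.toLp 2 (fun j => msqrt ρ j i)

/-- The state `|ψ_i⟩ = η_i^{-1/2} √ρ e_i` of the discrimination ensemble associated to `ρ`. -/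
noncomputable def discVec {d : ℕ} (ρ : Matrix (Fin d) (Fin d) ℂ) (i : Fin d) :
    EuclideanSpace ℂ (Fin d) :=
  ((Real.sqrt ((ρ i i).re) : ℂ))⁻¹ • sqrtCol ρ i

/-- The QSD-state of an ensemble: `ρ_{ij} = √(η_i η_j) ⟨ψ_i|ψ_j⟩`. -/
noncomputable def qsdState {H : Type*} [NormedAddCommGroup H] [InnerProductSpace ℂ H]
    {n : ℕ} (ψ : Fin n → H) (η : Fin n → ℝ) : Matrix (Fin n) (Fin n) ℂ :=
  fun i j => (Real.sqrt (η i * η j) : ℂ) * (inner ℂ (ψ i) (ψ j) : ℂ)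




section Helpers

variable {d n : ℕ}


/-- linear map sending `e i` to `v i`. -/
def elmap (v : Fin n → EuclideanSpace ℂ (Fin d)) :
    EuclideanSpace ℂ (Fin n) →ₗ[ℂ] EuclideanSpace ℂ (Fin d) where
  toFun x := ∑ i, x i • v i
  map_add' x y := by
    simp only [PiLp.add_apply, add_smul, Finset.sum_add_distrib]
  map_smul' c x := by
    simp only [PiLp.smul_apply, smul_eq_mul, RingHom.id_apply, Finset.smul_sum, smul_smul]

lemma elmap_single (v : Fin n → EuclideanSpace ℂ (Fin d)) (i : Fin n) :
    elmap v (EuclideanSpace.single i 1) = v i := by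
  simp only [elmap, LinearMap.coe_mk, AddHom.coe_mk]
  rw [Finset.sum_eq_single i]
  · simp [EuclideanSpace.single_apply]
  · intro j _ hj
    rw [EuclideanSpace.single_apply, if_neg hj, zero_smul]
  · simp

lemma inner_elmap (v w : Fin n → EuclideanSpace ℂ (Fin d)) (x y : EuclideanSpace ℂ (Fin n)) :
    (inner ℂ (elmap v x) (elmap w y) : ℂ) =
      ∑ i, ∑ j, (starRingEnd ℂ) (x i) * y j * (inner ℂ (v i) (w j) : ℂ) := by
  simp only [elmap, LinearMap.coe_mk, AddHom.coe_mk, sum_inner, inner_sum, inner_smul_left,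
    inner_smul_right]
  rw [Finset.sum_comm]
  exact Finset.sum_congr rfl fun i _ => by
    rw [Finset.mul_sum]
    exact Finset.sum_congr rfl fun j _ => by ring

lemma exists_isometryEquiv (ψ φ : Fin n → EuclideanSpace ℂ (Fin d))
    (h : ∀ i j, (inner ℂ (φ i) (φ j) : ℂ) = inner ℂ (ψ i) (ψ j)) :
    ∃ U : EuclideanSpace ℂ (Fin d) ≃ₗᵢ[ℂ] EuclideanSpace ℂ (Fin d), ∀ i, U (φ i) = ψ i := by
  set S := elmap (d := d) φ with hS
  set T := elmap (d := d) ψ with hT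
  have hinner : ∀ x : EuclideanSpace ℂ (Fin n),
      (inner ℂ (S x) (S x) : ℂ) = inner ℂ (T x) (T x) := by
    intro x
    rw [hS, hT, inner_elmap, inner_elmap]
    exact Finset.sum_congr rfl fun i _ => Finset.sum_congr rfl fun j _ => by rw [h]
  have hnorm : ∀ x, ‖S x‖ = ‖T x‖ := by
    intro x
    rw [@norm_eq_sqrt_re_inner ℂ, @norm_eq_sqrt_re_inner ℂ, hinner]
  have hker : LinearMap.ker S = LinearMap.ker T := by
    ext x
    simp only [LinearMap.mem_ker]
    rw [show (S x = 0) ↔ ‖S x‖ = 0 from norm_eq_zero.symm, hnorm x, norm_eq_zero]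
  -- the isometry on the range of S
  let e1 := S.quotKerEquivRange
  let e2 := T.quotKerEquivRange
  let q := Submodule.quotEquivOfEq _ _ hker
  let g : LinearMap.range S →ₗ[ℂ] EuclideanSpace ℂ (Fin d) :=
    (LinearMap.range T).subtype ∘ₗ (e2.toLinearMap ∘ₗ (q.toLinearMap ∘ₗ e1.symm.toLinearMap))
  have hg : ∀ (x : EuclideanSpace ℂ (Fin n)) (hx : S x ∈ LinearMap.range S),
      g ⟨S x, hx⟩ = T x := by
    intro x hx
    have h1 : e1.symm ⟨S x, hx⟩ = Submodule.Quotient.mk x :=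
      S.quotKerEquivRange_symm_apply_image x hx
    have h2 : q (Submodule.Quotient.mk x) = Submodule.Quotient.mk x :=
      Submodule.quotEquivOfEq_mk _ _ hker x
    have h3 : g ⟨S x, hx⟩ = ((e2 (q (e1.symm ⟨S x, hx⟩))) : EuclideanSpace ℂ (Fin d)) := rfl
    rw [h3, h1, h2]
    exact T.quotKerEquivRange_apply_mk x
  have hgnorm : ∀ v : LinearMap.range S, ‖g v‖ = ‖v‖ := by
    rintro ⟨-, x, rfl⟩
    rw [hg x ⟨x, rfl⟩]
    exact (hnorm x).symm
  let L : LinearMap.range S →ₗᵢ[ℂ] EuclideanSpace ℂ (Fin d) := ⟨g, hgnorm⟩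
  let U0 := L.extend
  have hU0 : ∀ i, U0 (φ i) = ψ i := by
    intro i
    have hmem : φ i ∈ LinearMap.range S := ⟨EuclideanSpace.single i 1, elmap_single φ i⟩
    have h1 : U0 ((⟨φ i, hmem⟩ : LinearMap.range S) : EuclideanSpace ℂ (Fin d)) =
        L ⟨φ i, hmem⟩ := L.extend_apply _
    rw [Submodule.coe_mk] at h1
    rw [h1]
    show g ⟨φ i, hmem⟩ = ψ i
    have : (⟨φ i, hmem⟩ : LinearMap.range S) =
        ⟨S (EuclideanSpace.single i 1), LinearMap.mem_range_self S _⟩ := by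
      ext1
      exact (elmap_single φ i).symm
    rw [this, hg, hT, elmap_single]
  have hsurj : Function.Surjective U0 := by
    have : Function.Injective U0.toLinearMap := U0.injective
    exact (LinearMap.injective_iff_surjective).mp this
  exact ⟨LinearIsometryEquiv.ofSurjective U0 hsurj, fun i => by
    rw [← hU0 i]; rfl⟩


/-- The set of achievable success probabilities. -/
def succSet (ψ : Fin n → EuclideanSpace ℂ (Fin d)) (η : Fin n → ℝ) : Set ℝ :=
  {x : ℝ | ∃ M : Fin n → EuclideanSpace ℂ (Fin d) →L[ℂ] EuclideanSpace ℂ (Fin d), IsPOVM M ∧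
    x = ∑ i, η i * ((inner ℂ (ψ i) ((M i) (ψ i)) : ℂ)).re}

lemma optSuccess_eq_sSup (ψ : Fin n → EuclideanSpace ℂ (Fin d)) (η : Fin n → ℝ) :
    optSuccess ψ η = sSup (succSet ψ η) := rfl

lemma succSet_subset_of_isometry (ψ φ : Fin n → EuclideanSpace ℂ (Fin d)) (η : Fin n → ℝ)
    (U : EuclideanSpace ℂ (Fin d) ≃ₗᵢ[ℂ] EuclideanSpace ℂ (Fin d)) (hU : ∀ i, U (φ i) = ψ i) :
    succSet φ η ⊆ succSet ψ η := by
  rintro x ⟨M, ⟨hpos, hsum⟩, rfl⟩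
  let Uc : EuclideanSpace ℂ (Fin d) →L[ℂ] EuclideanSpace ℂ (Fin d) :=
    U.toLinearIsometry.toContinuousLinearMap
  have hUc : ∀ x, Uc x = U x := fun _ => rfl
  have hadj : ContinuousLinearMap.adjoint Uc = U.symm.toLinearIsometry.toContinuousLinearMap := by
    symm
    rw [ContinuousLinearMap.eq_adjoint_iff]
    intro a b
    show (inner ℂ (U.symm a) b : ℂ) = inner ℂ a (Uc b)
    rw [← U.inner_map_map (U.symm a) b, U.apply_symm_apply, hUc]
  have hadj' : ∀ y, (ContinuousLinearMap.adjoint Uc) y = U.symm y := fun y => by rw [hadj]; rfl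
  refine ⟨fun i => Uc ∘L M i ∘L (ContinuousLinearMap.adjoint Uc), ⟨?_, ?_⟩, ?_⟩
  · exact fun i => (hpos i).conj_adjoint Uc
  · refine ContinuousLinearMap.ext fun y => ?_
    have h2 : (∑ i, Uc ∘L M i ∘L (ContinuousLinearMap.adjoint Uc)) y
        = ∑ i, Uc ((M i) ((ContinuousLinearMap.adjoint Uc) y)) := by
      simp [ContinuousLinearMap.sum_apply]
    have h3 : (∑ i, (M i) ((ContinuousLinearMap.adjoint Uc) y))
        = (∑ i, M i) ((ContinuousLinearMap.adjoint Uc) y) := by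
      simp [ContinuousLinearMap.sum_apply]
    rw [h2, ← map_sum, h3, hsum]
    simp only [ContinuousLinearMap.one_apply]
    rw [hadj' y, hUc, U.apply_symm_apply]
  · refine Finset.sum_congr rfl fun i _ => ?_
    congr 2
    have h1 : (ContinuousLinearMap.adjoint Uc) (ψ i) = φ i := by
      rw [hadj' (ψ i), ← hU i, U.symm_apply_apply]
    show (inner ℂ (φ i) ((M i) (φ i)) : ℂ) = inner ℂ (ψ i) (Uc ((M i) ((ContinuousLinearMap.adjoint Uc) (ψ i))))
    rw [h1, hUc, ← hU i, U.inner_map_map]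

lemma optSuccess_eq_of_isometry (ψ φ : Fin n → EuclideanSpace ℂ (Fin d)) (η : Fin n → ℝ)
    (U : EuclideanSpace ℂ (Fin d) ≃ₗᵢ[ℂ] EuclideanSpace ℂ (Fin d)) (hU : ∀ i, U (φ i) = ψ i) :
    optSuccess ψ η = optSuccess φ η := by
  rw [optSuccess_eq_sSup, optSuccess_eq_sSup]
  refine congrArg sSup (Set.Subset.antisymm ?_ ?_)
  · exact succSet_subset_of_isometry φ ψ η U.symm fun i => by
      rw [← hU i, U.symm_apply_apply]
  · exact succSet_subset_of_isometry ψ φ η U hU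

/-- Componentwise complex conjugation on `ℂ^d`. -/
def cvec (x : EuclideanSpace ℂ (Fin d)) : EuclideanSpace ℂ (Fin d) :=
  WithLp.toLp 2 (fun j => (starRingEnd ℂ) (x j))

lemma cvec_cvec (x : EuclideanSpace ℂ (Fin d)) : cvec (cvec x) = x :=
  by ext j; simp [cvec]

lemma inner_cvec (x y : EuclideanSpace ℂ (Fin d)) :
    (inner ℂ (cvec x) (cvec y) : ℂ) = (starRingEnd ℂ) (inner ℂ x y : ℂ) := by
  simp only [PiLp.inner_apply, RCLike.inner_apply, cvec, PiLp.toLp_apply, map_sum, map_mul,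
    RingHomCompTriple.comp_apply, Complex.conj_conj]

lemma cvec_add (x y : EuclideanSpace ℂ (Fin d)) : cvec (x + y) = cvec x + cvec y :=
  by ext j; simp [cvec]

lemma cvec_sum {α : Type*} (s : Finset α) (f : α → EuclideanSpace ℂ (Fin d)) :
    cvec (∑ i ∈ s, f i) = ∑ i ∈ s, cvec (f i) := by
  classical
  induction s using Finset.induction_on with
  | empty => ext j; simp [cvec]
  | insert _ _ hni ih =>
      rw [Finset.sum_insert hni, Finset.sum_insert hni, cvec_add, ih]

/-- Conjugation of an operator on `ℂ^d`. -/
def cop (M : EuclideanSpace ℂ (Fin d) →L[ℂ] EuclideanSpace ℂ (Fin d)) :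
    EuclideanSpace ℂ (Fin d) →L[ℂ] EuclideanSpace ℂ (Fin d) :=
  LinearMap.toContinuousLinearMap
    { toFun := fun x => cvec (M (cvec x))
      map_add' := fun x y => by
        show cvec (M (cvec (x + y))) = cvec (M (cvec x)) + cvec (M (cvec y))
        rw [cvec_add, map_add, cvec_add]
      map_smul' := fun c x => by
        show cvec (M (cvec (c • x))) = (RingHom.id ℂ) c • cvec (M (cvec x))
        have h1 : cvec (c • x) = (starRingEnd ℂ) c • cvec x :=
          by ext j; simp [cvec]
        rw [h1, map_smul, RingHom.id_apply]
        ext j; simp [cvec] }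

lemma cop_apply (M : EuclideanSpace ℂ (Fin d) →L[ℂ] EuclideanSpace ℂ (Fin d))
    (x : EuclideanSpace ℂ (Fin d)) : cop M x = cvec (M (cvec x)) := rfl

lemma cop_isPositive {M : EuclideanSpace ℂ (Fin d) →L[ℂ] EuclideanSpace ℂ (Fin d)}
    (hM : M.IsPositive) : (cop M).IsPositive := by
  have hadjM : ContinuousLinearMap.adjoint M = M := by
    rw [← ContinuousLinearMap.star_eq_adjoint]; exact hM.isSelfAdjoint
  have hMs : ∀ a b : EuclideanSpace ℂ (Fin d), (inner ℂ (M a) b : ℂ) = inner ℂ a (M b) := by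
    intro a b
    conv_lhs => rw [← hadjM]
    exact ContinuousLinearMap.adjoint_inner_left M b a
  constructor
  · rw [← ContinuousLinearMap.isSelfAdjoint_iff_isSymmetric, ContinuousLinearMap.isSelfAdjoint_iff', eq_comm, ContinuousLinearMap.eq_adjoint_iff]
    intro a b
    rw [cop_apply, cop_apply]
    calc (inner ℂ (cvec (M (cvec a))) b : ℂ)
        = inner ℂ (cvec (M (cvec a))) (cvec (cvec b)) := by rw [cvec_cvec]
      _ = (starRingEnd ℂ) (inner ℂ (M (cvec a)) (cvec b) : ℂ) := inner_cvec _ _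
      _ = (starRingEnd ℂ) (inner ℂ (cvec a) (M (cvec b)) : ℂ) := by rw [hMs]
      _ = inner ℂ (cvec (cvec a)) (cvec (M (cvec b))) := (inner_cvec _ _).symm
      _ = inner ℂ a (cvec (M (cvec b))) := by rw [cvec_cvec]
  · intro x
    have h1 : ((cop M).reApplyInnerSelf x) = RCLike.re (inner ℂ (cop M x) x : ℂ) := rfl
    have h2 : (inner ℂ (cop M x) x : ℂ) = (starRingEnd ℂ) (inner ℂ (M (cvec x)) (cvec x) : ℂ) := by
      rw [cop_apply]
      calc (inner ℂ (cvec (M (cvec x))) x : ℂ)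
          = inner ℂ (cvec (M (cvec x))) (cvec (cvec x)) := by rw [cvec_cvec]
        _ = (starRingEnd ℂ) (inner ℂ (M (cvec x)) (cvec x) : ℂ) := inner_cvec _ _
    rw [h1, h2]
    have := hM.2 (cvec x)
    rw [ContinuousLinearMap.reApplyInnerSelf] at this
    simpa [hMs] using this

lemma succSet_subset_cvec (φ : Fin n → EuclideanSpace ℂ (Fin d)) (η : Fin n → ℝ) :
    succSet φ η ⊆ succSet (fun i => cvec (φ i)) η := by
  rintro x ⟨M, ⟨hpos, hsum⟩, rfl⟩
  refine ⟨fun i => cop (M i), ⟨fun i => cop_isPositive (hpos i), ?_⟩, ?_⟩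
  · refine ContinuousLinearMap.ext fun y => ?_
    have h2 : (∑ i, cop (M i)) y = ∑ i, cvec ((M i) (cvec y)) := by
      simp [ContinuousLinearMap.sum_apply, cop_apply]
    have h3 : (∑ i, (M i) (cvec y)) = (∑ i, M i) (cvec y) := by
      simp [ContinuousLinearMap.sum_apply]
    rw [h2, ← cvec_sum, h3, hsum]
    simp only [ContinuousLinearMap.one_apply]
    rw [cvec_cvec]
  · refine Finset.sum_congr rfl fun i _ => ?_
    have h9 : (inner ℂ (cvec (φ i)) (cop (M i) (cvec (φ i))) : ℂ)
        = (starRingEnd ℂ) (inner ℂ (φ i) ((M i) (φ i)) : ℂ) := by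
      rw [cop_apply, cvec_cvec]; exact inner_cvec _ _
    show η i * (inner ℂ (φ i) ((M i) (φ i)) : ℂ).re
        = η i * (inner ℂ (cvec (φ i)) (cop (M i) (cvec (φ i))) : ℂ).re
    rw [h9, Complex.conj_re]

lemma optSuccess_cvec (φ : Fin n → EuclideanSpace ℂ (Fin d)) (η : Fin n → ℝ) :
    optSuccess (fun i => cvec (φ i)) η = optSuccess φ η := by
  rw [optSuccess_eq_sSup, optSuccess_eq_sSup]
  refine congrArg sSup (Set.Subset.antisymm ?_ ?_)
  · have := succSet_subset_cvec (fun i => cvec (φ i)) η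
    simpa only [cvec_cvec] using this
  · exact succSet_subset_cvec φ η
end Helpers

/-- Two ensembles with the same probabilities and the same (or conjugate) pairwise inner
products have the same optimal success probability of ambiguous discrimination. -/
theorem optSuccess_eq_of_inner_eq {d n : ℕ} (ψ φ : Fin n → EuclideanSpace ℂ (Fin d))
    (η : Fin n → ℝ) (hψ : ∀ i, ‖ψ i‖ = 1) (hφ : ∀ i, ‖φ i‖ = 1)
    (hη : ∀ i, 0 ≤ η i) (hsum : ∑ i, η i = 1)
    (h : (∀ i j, (inner ℂ (ψ i) (ψ j) : ℂ) = inner ℂ (φ i) (φ j)) ∨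
         (∀ i j, (inner ℂ (ψ i) (ψ j) : ℂ) = starRingEnd ℂ (inner ℂ (φ i) (φ j) : ℂ))) :
    optSuccess ψ η = optSuccess φ η := by
  rcases h with h | h
  · obtain ⟨U, hU⟩ := exists_isometryEquiv ψ φ (fun i j => (h i j).symm)
    exact optSuccess_eq_of_isometry ψ φ η U hU
  · have h2 : ∀ i j, (inner ℂ (cvec (φ i)) (cvec (φ j)) : ℂ) = inner ℂ (ψ i) (ψ j) :=
      fun i j => (inner_cvec _ _).trans (h i j).symm
    obtain ⟨U, hU⟩ := exists_isometryEquiv ψ (fun i => cvec (φ i)) h2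
    calc optSuccess ψ η = optSuccess (fun i => cvec (φ i)) η :=
          optSuccess_eq_of_isometry ψ (fun i => cvec (φ i)) η U hU
      _ = optSuccess φ η := optSuccess_cvec φ η

end
end

section
/- Let ρ be a density matrix on ℂ^k with all diagonal entries ρ_{ii} > 0, let |d_1⟩,…,|d_k⟩ be unit vectors in a finite-dimensional complex Hilbert space, and define ρ_s on ℂ^k by (ρ_s)_{ij} = ρ_{ij} ⟨d_j|d_i⟩. Then ρ_s is a density matrix with (ρ_s)_{ii} = ρ_{ii} > 0, and its associated discrimination ensemble |ψ_i⟩ = ρ_{ii}^{−1/2} √(ρ_s) e_i satisfies |⟨ψ_i|ψ_j⟩| ≤ |⟨d_i|d_j⟩| for all i, j. -/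
open scoped BigOperators ComplexOrder

noncomputable section
open scoped Classical

open Matrix in
private lemma msqrt_herm {d : ℕ} {A : Matrix (Fin d) (Fin d) ℂ} (hA : A.PosSemidef) :
    (msqrt A)ᴴ = msqrt A := by
  rw [msqrt, dif_pos hA, conjTranspose_mul, conjTranspose_mul, diagonal_conjTranspose]
  simp [mul_assoc, ← star_eq_conjTranspose]
  congr 3
  funext i
  simp

open Matrix in
private lemma msqrt_mul_self {d : ℕ} {A : Matrix (Fin d) (Fin d) ℂ} (hA : A.PosSemidef) :
    msqrt A * msqrt A = A := by
  rw [msqrt, dif_pos hA]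
  have hU : (star hA.1.eigenvectorUnitary : Matrix (Fin d) (Fin d) ℂ) *
      (hA.1.eigenvectorUnitary : Matrix (Fin d) (Fin d) ℂ) = 1 := Unitary.coe_star_mul_self _
  simp only [mul_assoc]
  rw [← mul_assoc (star _ : Matrix (Fin d) (Fin d) ℂ) _, hU, one_mul, ← mul_assoc (diagonal _),
    diagonal_mul_diagonal]
  conv_rhs => rw [hA.1.spectral_theorem, Unitary.conjStarAlgAut_apply]
  rw [← mul_assoc]
  congr 3
  funext i
  simp only [Function.comp]
  rw [← Complex.ofReal_mul, Real.mul_self_sqrt (hA.eigenvalues_nonneg i)]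
  rfl

open Matrix in
private lemma inner_sqrtCol {d : ℕ} {A : Matrix (Fin d) (Fin d) ℂ} (hA : A.PosSemidef) (i j : Fin d) :
    (inner ℂ (sqrtCol A i) (sqrtCol A j) : ℂ) = A i j := by
  have herm : (msqrt A)ᴴ = msqrt A := msqrt_herm hA
  have : (inner ℂ (sqrtCol A i) (sqrtCol A j) : ℂ) = ((msqrt A)ᴴ * msqrt A) i j := by
    simp [PiLp.inner_apply, sqrtCol, Matrix.mul_apply, Matrix.conjTranspose_apply,
      RCLike.inner_apply]
    exact Finset.sum_congr rfl fun _ _ => mul_comm _ _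
  rw [this, herm, msqrt_mul_self hA]

open Matrix in
private lemma norm_apply_le {d : ℕ} {A : Matrix (Fin d) (Fin d) ℂ} (hA : A.PosSemidef) (i j : Fin d) :
    ‖A i j‖ ≤ Real.sqrt ((A i i).re) * Real.sqrt ((A j j).re) := by
  have h1 := norm_inner_le_norm (𝕜 := ℂ) (sqrtCol A i) (sqrtCol A j)
  rw [inner_sqrtCol hA] at h1
  have hni : ∀ k, ‖sqrtCol A k‖ = Real.sqrt ((A k k).re) := by
    intro k
    have h2 := inner_sqrtCol hA k k
    rw [inner_self_eq_norm_sq_to_K (𝕜 := ℂ)] at h2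
    rw [← Real.sqrt_sq (norm_nonneg (sqrtCol A k))]
    congr 1
    have := congrArg Complex.re h2
    simpa [← Complex.ofReal_pow] using this
  rw [hni i, hni j] at h1
  exact h1

open Matrix in
/-- The reduced quanton state is a density matrix with the same diagonal, and its associated
discrimination ensemble is pairwise no harder to distinguish than the detector states. -/
theorem reduced_state_inner_le {H : Type*} [NormedAddCommGroup H]
    [InnerProductSpace ℂ H] [FiniteDimensional ℂ H] {k : ℕ}
    (ρ : Matrix (Fin k) (Fin k) ℂ) (hρ : IsDensityMatrix ρ)
    (hdiag : ∀ i, 0 < (ρ i i).re)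
    (dv : Fin k → H) (hd : ∀ i, ‖dv i‖ = 1) :
    IsDensityMatrix (Matrix.of fun i j : Fin k => ρ i j * (inner ℂ (dv j) (dv i) : ℂ)) ∧
    (∀ i, (Matrix.of fun i j : Fin k => ρ i j * (inner ℂ (dv j) (dv i) : ℂ)) i i = ρ i i) ∧
    (∀ i j, ‖(inner ℂ (discVec (Matrix.of fun i j : Fin k => ρ i j * (inner ℂ (dv j) (dv i) : ℂ)) i)
              (discVec (Matrix.of fun i j : Fin k => ρ i j * (inner ℂ (dv j) (dv i) : ℂ)) j) : ℂ)‖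
            ≤ ‖(inner ℂ (dv i) (dv j) : ℂ)‖) := by
  set σ : Matrix (Fin k) (Fin k) ℂ :=
    Matrix.of fun i j : Fin k => ρ i j * (inner ℂ (dv j) (dv i) : ℂ) with hσ
  have hdd : ∀ i, (inner ℂ (dv i) (dv i) : ℂ) = 1 := by
    intro i
    rw [inner_self_eq_norm_sq_to_K (𝕜 := ℂ), hd i]
    norm_num
  have hdiagσ : ∀ i, σ i i = ρ i i := by
    intro i; simp [hσ, hdd i, hd i]
  -- square root of ρ
  set B : Matrix (Fin k) (Fin k) ℂ := msqrt ρ with hB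
  have hBdef : B = msqrt ρ := rfl
  have hBherm : ∀ m i, (starRingEnd ℂ) (B m i) = B i m := by
    intro m i
    have h := msqrt_herm hρ.1
    rw [← hBdef] at h
    exact congrFun (congrFun h i) m
  have hρij : ∀ i j, ρ i j = ∑ m, (starRingEnd ℂ) (B m i) * B m j := by
    intro i j
    conv_lhs => rw [← msqrt_mul_self hρ.1, ← hBdef]
    rw [Matrix.mul_apply]
    exact Finset.sum_congr rfl fun m _ => by rw [hBherm m i]
  -- σ is Hermitian
  have hherm : σ.IsHermitian := by
    refine Matrix.IsHermitian.ext fun i j => ?_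
    simp only [hσ, Matrix.of_apply, star_mul']
    rw [show (star (inner ℂ (dv i) (dv j) : ℂ)) = (inner ℂ (dv j) (dv i) : ℂ) from
      inner_conj_symm _ _, hρ.1.1.apply i j]
  -- σ is PSD
  have hpsd : σ.PosSemidef := by
    refine Matrix.PosSemidef.of_dotProduct_mulVec_nonneg hherm fun x => ?_
    set v : Fin k → H := fun m => ∑ i, (starRingEnd ℂ) (x i * B m i) • dv i with hv
    have key : star x ⬝ᵥ (σ *ᵥ x) = ∑ m, (inner ℂ (v m) (v m) : ℂ) := by
      have lhs : star x ⬝ᵥ (σ *ᵥ x) =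
          ∑ i, ∑ j, ∑ m, (starRingEnd ℂ) (x i * B m i) * (x j * B m j) *
            (inner ℂ (dv j) (dv i) : ℂ) := by
        simp only [dotProduct, Matrix.mulVec, Pi.star_apply, dotProduct,
          Finset.mul_sum, hσ, Matrix.of_apply]
        refine Finset.sum_congr rfl fun i _ => Finset.sum_congr rfl fun j _ => ?_
        rw [hρij i j, Finset.sum_mul, Finset.sum_mul, Finset.mul_sum]
        refine Finset.sum_congr rfl fun m _ => ?_
        simp only [_root_.map_mul, RCLike.star_def]
        ring
      have rhs : ∀ m, (inner ℂ (v m) (v m) : ℂ) =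
          ∑ i, ∑ j, (starRingEnd ℂ) (x i * B m i) * (x j * B m j) *
            (inner ℂ (dv j) (dv i) : ℂ) := by
        intro m
        rw [hv]
        simp only [sum_inner, inner_smul_left, inner_sum, inner_smul_right, Finset.mul_sum,
          Complex.conj_conj, _root_.map_mul]
        refine Finset.sum_congr rfl fun i _ => Finset.sum_congr rfl fun j _ => ?_
        ring
      rw [lhs, Finset.sum_congr rfl (fun m (_ : m ∈ Finset.univ) => rhs m)]
      calc ∑ i, ∑ j, ∑ m, (starRingEnd ℂ) (x i * B m i) * (x j * B m j) *
              (inner ℂ (dv j) (dv i) : ℂ)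
          = ∑ i, ∑ m, ∑ j, (starRingEnd ℂ) (x i * B m i) * (x j * B m j) *
              (inner ℂ (dv j) (dv i) : ℂ) :=
            Finset.sum_congr rfl fun i _ => Finset.sum_comm
        _ = ∑ m, ∑ i, ∑ j, (starRingEnd ℂ) (x i * B m i) * (x j * B m j) *
              (inner ℂ (dv j) (dv i) : ℂ) := Finset.sum_comm
    rw [key]
    refine Finset.sum_nonneg fun m _ => ?_
    rw [inner_self_eq_norm_sq_to_K (𝕜 := ℂ)]
    have h0 : ((0:ℝ):ℂ) ≤ ((‖v m‖ ^ 2 : ℝ) : ℂ) := by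
      rw [Complex.real_le_real]; exact sq_nonneg _
    simpa using h0
  have htrace : σ.trace = 1 := by
    rw [Matrix.trace, ← hρ.2, Matrix.trace]
    exact Finset.sum_congr rfl fun i _ => hdiagσ i
  refine ⟨⟨hpsd, htrace⟩, hdiagσ, fun i j => ?_⟩
  -- part 3
  have hinner : (inner ℂ (discVec σ i) (discVec σ j) : ℂ) =
      (starRingEnd ℂ) ((Real.sqrt ((σ i i).re) : ℂ))⁻¹ *
        (((Real.sqrt ((σ j j).re) : ℂ))⁻¹ * σ i j) := by
    rw [discVec, discVec, inner_smul_left, inner_smul_right, inner_sqrtCol hpsd]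
  have hηi : 0 < Real.sqrt ((ρ i i).re) := Real.sqrt_pos.mpr (hdiag i)
  have hηj : 0 < Real.sqrt ((ρ j j).re) := Real.sqrt_pos.mpr (hdiag j)
  rw [hinner]
  have hσii : (σ i i).re = (ρ i i).re := by rw [hdiagσ i]
  have hσjj : (σ j j).re = (ρ j j).re := by rw [hdiagσ j]
  rw [hσii, hσjj]
  have hnormσ : ‖σ i j‖ = ‖ρ i j‖ * ‖(inner ℂ (dv i) (dv j) : ℂ)‖ := by
    rw [hσ]
    simp only [Matrix.of_apply, norm_mul]
    rw [norm_inner_symm]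
  have hbound : ‖ρ i j‖ ≤ Real.sqrt ((ρ i i).re) * Real.sqrt ((ρ j j).re) :=
    norm_apply_le hρ.1 i j
  rw [norm_mul, norm_mul]
  have h1 : ‖(starRingEnd ℂ) ((Real.sqrt ((ρ i i).re) : ℂ))⁻¹‖ = (Real.sqrt ((ρ i i).re))⁻¹ := by
    rw [RCLike.norm_conj]
    rw [norm_inv, Complex.norm_real, Real.norm_of_nonneg (Real.sqrt_nonneg _)]
  have h2 : ‖((Real.sqrt ((ρ j j).re) : ℂ))⁻¹‖ = (Real.sqrt ((ρ j j).re))⁻¹ := by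
    rw [norm_inv, Complex.norm_real, Real.norm_of_nonneg (Real.sqrt_nonneg _)]
  rw [h1, h2, hnormσ]
  set a := Real.sqrt ((ρ i i).re)
  set b := Real.sqrt ((ρ j j).re)
  have hnn : (0:ℝ) ≤ ‖(inner ℂ (dv i) (dv j) : ℂ)‖ := norm_nonneg _
  calc a⁻¹ * (b⁻¹ * (‖ρ i j‖ * ‖(inner ℂ (dv i) (dv j) : ℂ)‖))
      ≤ a⁻¹ * (b⁻¹ * ((a * b) * ‖(inner ℂ (dv i) (dv j) : ℂ)‖)) := by
        gcongr
    _ = ‖(inner ℂ (dv i) (dv j) : ℂ)‖ := by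
        field_simp

end
end
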